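/- (Chvátal's bound on the hypergeometric tail) Let n, n_i, n_j be natural numbers with 0 < n_j ≤ n and n_i ≤ n, set p = n_i/n, and let k be a natural number with p·n_j ≤ k ≤ n_j. Writing k = (p + t)·n_j with t ≥ 0, the hypergeometric tail satisfies H(k; n_i, n_j, n) ≤ ( (p/(p+t))^{p+t} · ((1−p)/(1−p−t))^{1−p−t} )^{n_j}, provided p + t < 1 (with the bound interpreted via the convention x^0 = 1 when p + t = 1). -/

import Mathlib

open Finset

noncomputable def hpmf (k ni nj n : ℕ) : ℝ :=
  ((Nat.choose ni k : ℝ) * (Nat.choose (n - ni) (nj - k) : ℝ)) / (Nat.choose n nj : ℝ)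

noncomputable def Htail (k ni nj n : ℕ) : ℝ :=
  ∑ ℓ ∈ Finset.Icc k nj, hpmf ℓ ni nj n


lemma descFact_ineq (n ni : ℕ) (h : ni ≤ n) : ∀ r : ℕ,
    ni.descFactorial r * n ^ r ≤ n.descFactorial r * ni ^ r := by
  intro r
  induction r with
  | zero => simp
  | succ r ih =>
    rw [Nat.descFactorial_succ, Nat.descFactorial_succ, pow_succ, pow_succ]
    have h2 : (ni - r) * n ≤ (n - r) * ni := by
      rw [Nat.sub_mul, Nat.sub_mul]
      calc ni * n - r * n ≤ ni * n - r * ni :=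
            Nat.sub_le_sub_left (Nat.mul_le_mul_left _ h) _
        _ = n * ni - r * ni := by rw [Nat.mul_comm ni n]
    calc (ni - r) * ni.descFactorial r * (n ^ r * n)
        = (ni.descFactorial r * n ^ r) * ((ni - r) * n) := by ring
      _ ≤ (n.descFactorial r * ni ^ r) * ((n - r) * ni) := Nat.mul_le_mul ih h2
      _ = (n - r) * n.descFactorial r * (ni ^ r * ni) := by ring

lemma choose_pow_le (n ni r : ℕ) (h : ni ≤ n) :
    ni.choose r * n ^ r ≤ n.choose r * ni ^ r := by
  have hd := descFact_ineq n ni h r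
  rw [Nat.descFactorial_eq_factorial_mul_choose, Nat.descFactorial_eq_factorial_mul_choose] at hd
  apply Nat.le_of_mul_le_mul_left _ (Nat.factorial_pos r)
  calc r.factorial * (ni.choose r * n ^ r) = r.factorial * ni.choose r * n ^ r := by ring
    _ ≤ r.factorial * n.choose r * ni ^ r := hd
    _ = r.factorial * (n.choose r * ni ^ r) := by ring


lemma sum_id (n ni nj r : ℕ) (hni : ni ≤ n) (hr : r ≤ nj) :
    ∑ ℓ ∈ range (nj + 1), ni.choose ℓ * ℓ.choose r * (n - ni).choose (nj - ℓ)
      = ni.choose r * (n - r).choose (nj - r) := by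
  by_cases hrni : r ≤ ni
  · -- restrict to Icc r nj
    have hsub : Finset.Icc r nj ⊆ range (nj + 1) := by
      intro x hx; simp only [Finset.mem_Icc] at hx; simp [Nat.lt_succ_of_le hx.2]
    rw [← Finset.sum_subset hsub]
    · rw [← Finset.Ico_add_one_right_eq_Icc, Finset.sum_Ico_eq_sum_range]
      have hstep : ∀ m ∈ range (nj + 1 - r), ni.choose (r + m) * (r + m).choose r *
          (n - ni).choose (nj - (r + m)) = ni.choose r * ((ni - r).choose m *
          (n - ni).choose (nj - r - m)) := by
        intro m _
        have h1 : ni.choose (r + m) * (r + m).choose r = ni.choose r * (ni - r).choose m := by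
          by_cases hm : r + m ≤ ni
          · have := Nat.choose_mul (n := ni) (Nat.le_add_right r m)
            rw [this, Nat.add_sub_cancel_left]
          · push_neg at hm
            have h0 : (ni - r).choose m = 0 := Nat.choose_eq_zero_of_lt (by omega)
            rw [Nat.choose_eq_zero_of_lt hm, h0]
            ring
        rw [h1, Nat.sub_add_eq, mul_assoc]
      rw [Finset.sum_congr rfl hstep, ← Finset.mul_sum]
      congr 1
      have hv : n - r = (ni - r) + (n - ni) := by omega
      rw [hv, Nat.add_choose_eq, Finset.Nat.sum_antidiagonal_eq_sum_range_succ_mk]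
      have : nj + 1 - r = (nj - r) + 1 := by omega
      rw [this]
    · intro x hx hnx
      have : x < r := by
        simp only [Finset.mem_Icc] at hnx
        simp only [Finset.mem_range] at hx
        omega
      rw [Nat.choose_eq_zero_of_lt this]; ring
  · push_neg at hrni
    rw [Nat.choose_eq_zero_of_lt hrni, Nat.zero_mul]
    apply Finset.sum_eq_zero
    intro ℓ _
    by_cases hl : ℓ ≤ ni
    · rw [Nat.choose_eq_zero_of_lt (by omega : ℓ < r)]; ring
    · rw [Nat.choose_eq_zero_of_lt (by omega : ni < ℓ)]; ring

lemma mgf_bound (n ni nj : ℕ) (hni : ni ≤ n) (hnj : nj ≤ n) (hn : 0 < n)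
    (a : ℝ) (ha : 1 ≤ a) :
    ∑ ℓ ∈ range (nj + 1), hpmf ℓ ni nj n * a ^ ℓ
      ≤ (1 - (ni : ℝ) / n + (ni : ℝ) / n * a) ^ nj := by
  have hc : (0:ℝ) < (n.choose nj : ℝ) := by
    exact_mod_cast Nat.choose_pos hnj
  have expand : ∀ ℓ ∈ range (nj + 1),
      a ^ ℓ = ∑ r ∈ range (nj + 1), (ℓ.choose r : ℝ) * (a - 1) ^ r := by
    intro ℓ hℓ
    simp only [mem_range] at hℓ
    have h1 : a ^ ℓ = (a - 1 + 1) ^ ℓ := by ring_nf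
    rw [h1, add_pow]
    have h2 : ∑ r ∈ range (ℓ + 1), (a - 1) ^ r * 1 ^ (ℓ - r) * (ℓ.choose r : ℝ)
        = ∑ r ∈ range (ℓ + 1), (ℓ.choose r : ℝ) * (a - 1) ^ r := by
      apply sum_congr rfl; intro r _; rw [one_pow]; ring
    rw [h2]
    apply Finset.sum_subset (range_subset_range.mpr (by omega : ℓ + 1 ≤ nj + 1))
    intro r hr hnr
    simp only [mem_range] at hr hnr
    rw [Nat.choose_eq_zero_of_lt (by omega)]
    simp
  have key : ∑ ℓ ∈ range (nj + 1),
      (ni.choose ℓ : ℝ) * ((n - ni).choose (nj - ℓ) : ℝ) * a ^ ℓ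
      ≤ (n.choose nj : ℝ) * (1 - (ni : ℝ) / n + (ni : ℝ) / n * a) ^ nj := by
    calc ∑ ℓ ∈ range (nj + 1), (ni.choose ℓ : ℝ) * ((n - ni).choose (nj - ℓ) : ℝ) * a ^ ℓ
        = ∑ ℓ ∈ range (nj + 1), ∑ r ∈ range (nj + 1),
            (ni.choose ℓ : ℝ) * ((n - ni).choose (nj - ℓ) : ℝ) *
              ((ℓ.choose r : ℝ) * (a - 1) ^ r) := by
          apply sum_congr rfl; intro ℓ hℓ; rw [expand ℓ hℓ, Finset.mul_sum]
      _ = ∑ r ∈ range (nj + 1), (a - 1) ^ r *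
            ((∑ ℓ ∈ range (nj + 1),
              ni.choose ℓ * ℓ.choose r * (n - ni).choose (nj - ℓ) : ℕ) : ℝ) := by
          rw [Finset.sum_comm]
          apply sum_congr rfl; intro r _
          rw [Nat.cast_sum, Finset.mul_sum]
          apply sum_congr rfl; intro ℓ _
          push_cast; ring
      _ = ∑ r ∈ range (nj + 1), (a - 1) ^ r *
            ((ni.choose r * (n - r).choose (nj - r) : ℕ) : ℝ) := by
          apply sum_congr rfl; intro r hr
          simp only [mem_range] at hr
          rw [sum_id n ni nj r hni (by omega)]
      _ ≤ ∑ r ∈ range (nj + 1), (a - 1) ^ r *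
            ((n.choose nj : ℝ) * (nj.choose r : ℝ) * ((ni : ℝ) / n) ^ r) := by
          apply Finset.sum_le_sum
          intro r hr
          simp only [mem_range] at hr
          push_cast
          apply mul_le_mul_of_nonneg_left _ (pow_nonneg (by linarith) r)
          have hid : (n.choose nj * nj.choose r : ℕ) = n.choose r * (n - r).choose (nj - r) :=
            Nat.choose_mul (by omega)
          have hid' : (n.choose nj : ℝ) * (nj.choose r : ℝ)
              = (n.choose r : ℝ) * ((n - r).choose (nj - r) : ℝ) := by
            exact_mod_cast hid
          rw [hid']
          have hcp : (ni.choose r : ℝ) ≤ (n.choose r : ℝ) * ((ni : ℝ) / n) ^ r := by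
            have h1 : (ni.choose r : ℝ) * (n : ℝ) ^ r ≤ (n.choose r : ℝ) * (ni : ℝ) ^ r := by
              exact_mod_cast choose_pow_le n ni r hni
            have hnp : (0:ℝ) < (n : ℝ) ^ r := by positivity
            rw [div_pow, ← mul_div_assoc, le_div_iff₀ hnp]
            exact h1
          calc (ni.choose r : ℝ) * ((n - r).choose (nj - r) : ℝ)
              ≤ ((n.choose r : ℝ) * ((ni : ℝ) / n) ^ r) * ((n - r).choose (nj - r) : ℝ) := by
                apply mul_le_mul_of_nonneg_right hcp (by positivity)
            _ = (n.choose r : ℝ) * ((n - r).choose (nj - r) : ℝ) * ((ni : ℝ) / n) ^ r := by ring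
      _ = (n.choose nj : ℝ) * (1 - (ni : ℝ) / n + (ni : ℝ) / n * a) ^ nj := by
          have h3 : (1 - (ni : ℝ) / n + (ni : ℝ) / n * a) = ((ni : ℝ) / n * (a - 1) + 1) := by
            ring
          rw [h3, add_pow, Finset.mul_sum]
          apply sum_congr rfl; intro r _
          rw [one_pow, mul_pow]
          ring
  have hLHS : ∑ ℓ ∈ range (nj + 1), hpmf ℓ ni nj n * a ^ ℓ
      = (∑ ℓ ∈ range (nj + 1),
          (ni.choose ℓ : ℝ) * ((n - ni).choose (nj - ℓ) : ℝ) * a ^ ℓ) / (n.choose nj : ℝ) := by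
    rw [Finset.sum_div]
    apply sum_congr rfl; intro ℓ _
    rw [hpmf]; ring
  rw [hLHS, div_le_iff₀ hc]
  linarith [key]

lemma hpmf_nonneg (k ni nj n : ℕ) : 0 ≤ hpmf k ni nj n := by
  rw [hpmf]; positivity

lemma markov_step (n ni nj k : ℕ) (a : ℝ) (ha : 1 ≤ a) :
    Htail k ni nj n * a ^ k ≤ ∑ ℓ ∈ range (nj + 1), hpmf ℓ ni nj n * a ^ ℓ := by
  have ha0 : (0:ℝ) < a := by linarith
  rw [Htail, Finset.sum_mul]
  calc ∑ ℓ ∈ Icc k nj, hpmf ℓ ni nj n * a ^ k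
      ≤ ∑ ℓ ∈ Icc k nj, hpmf ℓ ni nj n * a ^ ℓ := by
        apply Finset.sum_le_sum
        intro ℓ hℓ
        simp only [Finset.mem_Icc] at hℓ
        exact mul_le_mul_of_nonneg_left (pow_le_pow_right₀ ha hℓ.1) (hpmf_nonneg ℓ ni nj n)
    _ ≤ ∑ ℓ ∈ range (nj + 1), hpmf ℓ ni nj n * a ^ ℓ := by
        apply Finset.sum_le_sum_of_subset_of_nonneg
        · intro x hx
          simp only [Finset.mem_Icc] at hx
          simp [Nat.lt_succ_of_le hx.2]
        · intro ℓ _ _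
          exact mul_nonneg (hpmf_nonneg ℓ ni nj n) (pow_nonneg ha0.le ℓ)

theorem chvatal_bound (n ni nj k : ℕ) (hnj : 0 < nj) (hn : nj ≤ n) (hni : ni ≤ n)
    (t : ℝ) (ht : 0 ≤ t)
    (hk : (k : ℝ) = ((ni : ℝ) / n + t) * nj) (hk' : k ≤ nj)
    (hlt : (ni : ℝ) / n + t < 1) :
    Htail k ni nj n ≤
      ((((ni : ℝ) / n) / ((ni : ℝ) / n + t)) ^ ((ni : ℝ) / n + t) *
          ((1 - (ni : ℝ) / n) / (1 - (ni : ℝ) / n - t)) ^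
            (1 - (ni : ℝ) / n - t)) ^ (nj : ℝ) := by
  have hn0 : 0 < n := lt_of_lt_of_le hnj hn
  have hn0' : (0:ℝ) < n := by exact_mod_cast hn0
  set p : ℝ := (ni : ℝ) / n with hpdef
  have hp0 : 0 ≤ p := by positivity
  have h1pt : 0 < 1 - p - t := by linarith
  have h1p : 0 < 1 - p := by linarith
  by_cases hni0 : ni = 0
  · subst hni0
    have hp : p = 0 := by simp [hpdef]
    rcases Nat.eq_zero_or_pos k with hk0 | hk1
    · subst hk0
      have ht0 : t = 0 := by
        have hnj' : (0:ℝ) < nj := by exact_mod_cast hnj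
        have h := hk
        rw [hp] at h
        push_cast at h
        have h' : t * (nj:ℝ) = 0 := by linear_combination -h
        rcases mul_eq_zero.mp h' with h'' | h''
        · exact h''
        · exact absurd h'' hnj'.ne'
      have hRHS : ((p / (p + t)) ^ (p + t) *
          ((1 - p) / (1 - p - t)) ^ (1 - p - t)) ^ (nj : ℝ) = 1 := by
        rw [hp, ht0]
        norm_num
      rw [hRHS]
      -- Htail 0 0 nj n = 1
      have hcp : (0:ℝ) < (n.choose nj : ℝ) := by exact_mod_cast Nat.choose_pos hn
      have : Htail 0 0 nj n = 1 := by
        rw [Htail]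
        rw [Finset.sum_eq_single 0]
        · rw [hpmf]; simp; exact_mod_cast hcp.ne'
        · intro ℓ _ hℓ
          rw [hpmf, Nat.choose_eq_zero_of_lt (Nat.pos_of_ne_zero hℓ)]
          simp
        · simp [hnj.le]
      rw [this]
    · -- k ≥ 1 : Htail = 0 ≤ RHS
      have hH0 : Htail k 0 nj n = 0 := by
        rw [Htail]
        apply Finset.sum_eq_zero
        intro ℓ hℓ
        simp only [Finset.mem_Icc] at hℓ
        rw [hpmf, Nat.choose_eq_zero_of_lt (by omega : 0 < ℓ)]
        simp
      rw [hH0]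
      apply Real.rpow_nonneg
      apply mul_nonneg <;> apply Real.rpow_nonneg
      · apply div_nonneg hp0; linarith
      · apply div_nonneg h1p.le h1pt.le
  · -- main case : ni ≥ 1
    have hp : 0 < p := by
      apply div_pos _ hn0'
      exact_mod_cast Nat.pos_of_ne_zero hni0
    have hpt : 0 < p + t := by linarith
    have hD : 0 < p * (1 - p - t) := mul_pos hp h1pt
    set a : ℝ := ((p + t) * (1 - p)) / (p * (1 - p - t)) with hadef
    have ha0 : 0 < a := div_pos (mul_pos hpt h1p) hD
    have ha1 : 1 ≤ a := by
      rw [hadef, le_div_iff₀ hD]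
      nlinarith
    have hb : 1 - p + p * a = (1 - p) / (1 - p - t) := by
      rw [hadef]
      field_simp
      ring
    set Y : ℝ := (1 - p) / (1 - p - t) with hYdef
    have hY : 0 < Y := div_pos h1p h1pt
    set X : ℝ := p / (p + t) with hXdef
    have hX : 0 < X := div_pos hp hpt
    have hak : (0:ℝ) < a ^ k := pow_pos ha0 k
    -- Chain: Htail ≤ Y^nj / a^k
    have hchain : Htail k ni nj n ≤ Y ^ nj / a ^ k := by
      rw [le_div_iff₀ hak]
      calc Htail k ni nj n * a ^ k
          ≤ ∑ ℓ ∈ range (nj + 1), hpmf ℓ ni nj n * a ^ ℓ := markov_step n ni nj k a ha1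
        _ ≤ (1 - p + p * a) ^ nj := mgf_bound n ni nj hni hn hn0 a ha1
        _ = Y ^ nj := by rw [hb]
    refine hchain.trans_eq ?_
    -- Y^nj / a^k = RHS
    have hXY : X / Y = a⁻¹ := by
      rw [hXdef, hYdef, hadef]
      field_simp
    have e1 : Y ^ (1 - p - t) = Y * Y ^ (-(p + t)) := by
      have h : (1 - p - t) = 1 + (-(p + t)) := by ring
      rw [h, Real.rpow_add hY, Real.rpow_one]
    have e2 : X ^ (p + t) * Y ^ (-(p + t)) = (a⁻¹) ^ (p + t) := by
      rw [← hXY, Real.div_rpow hX.le hY.le, Real.rpow_neg hY.le, div_eq_mul_inv]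
    have hbase : X ^ (p + t) * Y ^ (1 - p - t) = (a⁻¹) ^ (p + t) * Y := by
      rw [e1, ← e2]; ring
    rw [hbase]
    rw [Real.mul_rpow (Real.rpow_nonneg (inv_nonneg.mpr ha0.le) _) hY.le]
    rw [← Real.rpow_natCast Y nj, ← Real.rpow_mul (inv_nonneg.mpr ha0.le)]
    have hexp : (p + t) * (nj : ℝ) = (k : ℝ) := hk.symm
    rw [hexp, Real.rpow_natCast a⁻¹ k, inv_pow, Real.rpow_natCast Y nj,
      div_eq_mul_inv, mul_comm]
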